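/- (Sah's lemma for H¹.) Let k be a commutative ring, G a group, and M a representation of G over k. Let g be an element of the center of G. Then the G-equivariant map M → M given by m ↦ g•m − m induces the zero map on the first group cohomology H¹(G, M). -/

import Mathlib

universe u

open groupCohomology

/-! Comparing the cocycle identity at `g * x` and at `x * g = g * x` shows that, for central `g`,
`g • c x - c x = x • c g - c g`: the pushed-forward cocycle is the coboundary of `c g`. -/

lemma groupCohomology.cocycles₁_rho_apply_sub_eq_of_mem_center {k G : Type u} [CommRing k]
    [Group G] {M : Rep k G} (c : cocycles₁ M) {g : G} (hg : g ∈ Subgroup.center G) (x : G) :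
    M.ρ g (c x) - c x = M.ρ x (c g) - c g := by
  have hc := (mem_cocycles₁_iff (c : G → M)).1 c.2
  have h := hc g x
  rw [← Subgroup.mem_center_iff.1 hg x, hc x g] at h
  linear_combination (norm := module) -h

/-- **Sah's lemma for `H¹`.** Let `k` be a commutative ring, `G` a group, `M` a representation
of `G` over `k`, and let `g` be central in `G`.  The `G`-equivariant map `M → M`,
`m ↦ g•m − m`, induces the zero map on `H¹(G, M)`: for any 1-cocycle `c`, the pushed-forward
function `x ↦ g•(c x) − c x` is again a 1-cocycle, and its cohomology class vanishes. -/
theorem sah_lemma_H1 (k G : Type u) [CommRing k] [Group G] (M : Rep k G)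
    (g : G) (hg : g ∈ Subgroup.center G) :
    ∀ c : groupCohomology.cocycles₁ M,
      ∃ d : groupCohomology.cocycles₁ M,
        (∀ x : G, d x = M.ρ g (c x) - c x) ∧ groupCohomology.H1π M d = 0 := by
  intro c
  refine ⟨⟨fun x => M.ρ x (c g) - c g, coboundaries₁_le_cocycles₁ M ⟨c g, rfl⟩⟩,
    fun x => (cocycles₁_rho_apply_sub_eq_of_mem_center c hg x).symm, ?_⟩
  exact (H1π_eq_zero_iff _).2 ⟨c g, rfl⟩
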